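/- arXiv:math-ph/0408052 — 3 statements merged into one kernel-verified Lean document; each statement's English description precedes it below -/
import Mathlib

section
/- Let (a_j)_{j∈ℤ} be a sequence of nonnegative reals tending to 0 as |j| → ∞, and let m ∈ ℤ, m ≠ 0. Suppose that for each j, a_j = 0 implies a_{j+m} = 0, and that there exists J such that a_{j+m} ≤ a_j whenever |j| ≥ J. Then a_j = 0 for all j. -/
theorem seq_lemma_aux (a : ℤ → ℝ) (ha : ∀ j, 0 ≤ a j)
    (h0 : ∀ ε : ℝ, 0 < ε → ∃ N : ℤ, ∀ j : ℤ, N ≤ |j| → a j < ε)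
    (m : ℤ) (hm : 0 < m)
    (hzero : ∀ j : ℤ, a j = 0 → a (j + m) = 0)
    (hJ : ∃ J : ℤ, ∀ j : ℤ, J ≤ |j| → a (j + m) ≤ a j) :
    ∀ j : ℤ, a j = 0 := by
  obtain ⟨J, hJ⟩ := hJ
  set J' := max J 0 with hJ'def
  have hJJ' : J ≤ J' := le_max_left _ _
  have hJ'0 : 0 ≤ J' := le_max_right _ _
  have key : ∀ i : ℤ, i ≤ -J' → a i = 0 := by
    intro i hi
    have mono : ∀ k : ℕ, a i ≤ a (i - k * m) := by
      intro k
      induction k with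
      | zero => simp
      | succ k ih =>
        refine le_trans ih ?_
        have hnn : (0:ℤ) ≤ ((k:ℤ)+1) * m := by positivity
        have h1 : i - ((k:ℤ)+1) * m + m = i - k * m := by ring
        have hle : i - ((k:ℤ)+1) * m ≤ 0 := by linarith
        have h2 : J ≤ |i - ((k:ℤ)+1) * m| := by
          rw [abs_of_nonpos hle]; linarith
        have h3 := hJ _ h2
        rw [h1] at h3
        have hc : ((k+1 : ℕ) : ℤ) = (k:ℤ) + 1 := by push_cast; ring
        rw [hc]
        exact h3
    have small : ∀ ε : ℝ, 0 < ε → a i < ε := by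
      intro ε hε
      obtain ⟨N, hN⟩ := h0 ε hε
      set k : ℕ := (N - i).toNat with hk
      have hki : (N - i : ℤ) ≤ (k : ℤ) := Int.self_le_toNat _
      have hkm : (k:ℤ) ≤ (k:ℤ) * m := le_mul_of_one_le_right (Int.natCast_nonneg _) hm
      have hi0 : i ≤ 0 := by linarith
      have habs : N ≤ |i - (k:ℤ) * m| := by
        rw [abs_of_nonpos (by linarith)]
        linarith
      exact lt_of_le_of_lt (mono k) (hN _ habs)
    have hle0 : a i ≤ 0 := by
      by_contra h
      push_neg at h
      exact absurd (small (a i) h) (lt_irrefl _)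
    exact le_antisymm hle0 (ha i)
  have zprop : ∀ k : ℕ, ∀ i : ℤ, a i = 0 → a (i + k * m) = 0 := by
    intro k
    induction k with
    | zero => intro i h; simpa using h
    | succ k ih =>
      intro i h
      have h1 := hzero _ (ih i h)
      have h2 : i + (k:ℤ) * m + m = i + ((k+1 : ℕ) : ℤ) * m := by push_cast; ring
      rw [h2] at h1
      exact h1
  intro j
  set k : ℕ := (J' + j).toNat with hk
  have hki : (J' + j : ℤ) ≤ (k : ℤ) := Int.self_le_toNat _
  have hkm : (k:ℤ) ≤ (k:ℤ) * m := le_mul_of_one_le_right (Int.natCast_nonneg _) hm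
  have h1 : j - (k:ℤ) * m ≤ -J' := by linarith
  have h2 := zprop k _ (key _ h1)
  have h3 : j - (k:ℤ) * m + (k:ℤ) * m = j := by ring
  rw [h3] at h2
  exact h2

theorem seq_lemma (a : ℤ → ℝ) (ha : ∀ j, 0 ≤ a j)
    (h0 : ∀ ε : ℝ, 0 < ε → ∃ N : ℤ, ∀ j : ℤ, N ≤ |j| → a j < ε)
    (m : ℤ) (hm : m ≠ 0)
    (hzero : ∀ j : ℤ, a j = 0 → a (j + m) = 0)
    (hJ : ∃ J : ℤ, ∀ j : ℤ, J ≤ |j| → a (j + m) ≤ a j) :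
    ∀ j : ℤ, a j = 0 := by
  rcases lt_or_gt_of_ne hm with hneg | hpos
  · -- m < 0 : reflect
    have := seq_lemma_aux (fun j => a (-j)) (fun j => ha _)
      (by
        intro ε hε
        obtain ⟨N, hN⟩ := h0 ε hε
        exact ⟨N, fun j hj => hN (-j) (by rwa [abs_neg])⟩)
      (-m) (by omega)
      (by
        intro j h
        have h2 := hzero (-j) h
        have h3 : -(j + -m) = -j + m := by ring
        simpa [h3] using h2)
      (by
        obtain ⟨J, hJ⟩ := hJ
        refine ⟨J, fun j hj => ?_⟩
        have h2 := hJ (-j) (by rwa [abs_neg])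
        have h3 : -(j + -m) = -j + m := by ring
        simpa [h3] using h2)
    intro j
    have := this (-j)
    simpa using this
  · exact seq_lemma_aux a ha h0 m hpos hzero hJ
end

section
/- Let H be a Hilbert space and suppose B : ℤ → (H →L H) is a family of bounded operators with B_j B_k = 0 for j ≠ k and B_j² = B_j, such that ∑_j ‖B_j u‖² = ‖u‖² for all u (an orthogonal resolution of identity). Let m ≠ 0 and suppose u ∈ H satisfies: for every j, ‖B_{j+m} u‖ ≤ C_j ‖B_j u‖ for some constants C_j ≥ 0, and there exists J with ‖B_{j+m} u‖ ≤ ‖B_j u‖ for |j| ≥ J. Then u = 0. -/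
theorem abstract_resolution {H : Type*} [NormedAddCommGroup H]
    [InnerProductSpace ℂ H] [CompleteSpace H]
    (B : ℤ → H →L[ℂ] H)
    (horth : ∀ j k : ℤ, j ≠ k → (B j).comp (B k) = 0)
    (hidem : ∀ j : ℤ, (B j).comp (B j) = B j)
    (hres : ∀ v : H, HasSum (fun j : ℤ => ‖B j v‖ ^ 2) (‖v‖ ^ 2))
    (m : ℤ) (hm : m ≠ 0) (u : H) (C : ℤ → ℝ)
    (hC : ∀ j : ℤ, 0 ≤ C j ∧ ‖B (j + m) u‖ ≤ C j * ‖B j u‖)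
    (hJ : ∃ J : ℤ, ∀ j : ℤ, J ≤ |j| → ‖B (j + m) u‖ ≤ ‖B j u‖) :
    u = 0 := by
  set a : ℤ → ℝ := fun j => ‖B j u‖ with ha
  have hsum : Summable (fun j : ℤ => a j ^ 2) := (hres u).summable
  have hzero : ∀ j, a j = 0 := by
    by_contra h
    push_neg at h
    obtain ⟨j, hj⟩ := h
    have hjpos : 0 < a j := lt_of_le_of_ne (norm_nonneg _) (Ne.symm hj)
    -- positivity propagates backward along the progression
    have hback : ∀ k : ℕ, 0 < a (j - (k : ℤ) * m) := by
      intro k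
      induction k with
      | zero => simpa using hjpos
      | succ n ih =>
        by_contra hle
        push_neg at hle
        have h0 : a (j - ((n : ℤ) + 1) * m) = 0 := by
          have := norm_nonneg (B (j - ((n : ℤ) + 1) * m) u)
          push_cast at hle ⊢
          linarith
        have hC' := (hC (j - ((n : ℤ) + 1) * m)).2
        have heq : j - ((n : ℤ) + 1) * m + m = j - (n : ℤ) * m := by ring
        rw [heq] at hC'
        have : a (j - (n : ℤ) * m) ≤ 0 := by
          calc a (j - (n : ℤ) * m) ≤ C (j - ((n : ℤ) + 1) * m) * a (j - ((n : ℤ) + 1) * m) := hC'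
          _ = 0 := by rw [h0, mul_zero]
        linarith
    obtain ⟨J, hJ'⟩ := hJ
    have hm1 : (1 : ℤ) ≤ |m| := by
      rcases lt_or_gt_of_ne hm with h | h <;> simp [abs_of_neg, abs_of_pos, h] <;> omega
    set K : ℕ := (J + |j| + 1).toNat with hK
    have hKbig : ∀ k : ℕ, K ≤ k → J ≤ |j - (k : ℤ) * m| := by
      intro k hk
      have h1 : |(k : ℤ) * m| - |j| ≤ |j - (k : ℤ) * m| := by
        have := abs_sub_abs_le_abs_sub ((k : ℤ) * m) j
        rw [abs_sub_comm] at this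
        linarith
      have h2 : (k : ℤ) ≤ |(k : ℤ) * m| := by
        rw [abs_mul, abs_of_nonneg (Int.ofNat_nonneg k)]
        nlinarith [Int.ofNat_nonneg k]
      have h3 : (K : ℤ) ≤ (k : ℤ) := by exact_mod_cast hk
      have h4 : J + |j| + 1 ≤ (K : ℤ) := by
        rw [hK]
        exact Int.self_le_toNat _
      linarith
    -- monotone: for d ≥ 0, a (j - K*m) ≤ a (j - (K+d)*m)
    have hmono : ∀ d : ℕ, a (j - (K : ℤ) * m) ≤ a (j - ((K : ℤ) + d) * m) := by
      intro d
      induction d with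
      | zero => simp
      | succ n ih =>
        have hbig : J ≤ |j - ((K : ℤ) + (n + 1)) * m| := by
          have h := hKbig (K + n + 1) (by omega)
          push_cast at h
          convert h using 3 <;> ring
        have := hJ' (j - ((K : ℤ) + (n + 1)) * m) hbig
        have heq : j - ((K : ℤ) + (n + 1)) * m + m = j - ((K : ℤ) + n) * m := by ring
        rw [heq] at this
        push_cast
        push_cast at ih
        linarith
    -- contradiction with summability
    set ε : ℝ := a (j - (K : ℤ) * m) ^ 2 with hε
    have hεpos : 0 < ε := pow_pos (hback K) 2
    have hcof : {i : ℤ | ε ≤ a i ^ 2}.Finite := by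
      have htend := hsum.tendsto_cofinite_zero
      have hev : ∀ᶠ i in Filter.cofinite, a i ^ 2 < ε :=
        htend.eventually_lt_const hεpos
      have := Filter.eventually_cofinite.mp hev
      refine this.subset ?_
      intro i hi
      simp only [Set.mem_setOf_eq] at hi ⊢
      linarith
    have hinj : Function.Injective (fun d : ℕ => j - ((K : ℤ) + d) * m) := by
      intro d₁ d₂ hd
      simp only at hd
      have : ((K : ℤ) + d₁) * m = ((K : ℤ) + d₂) * m := by omega
      have := mul_right_cancel₀ hm this
      omega
    have hmem : ∀ d : ℕ, (fun d : ℕ => j - ((K : ℤ) + d) * m) d ∈ {i : ℤ | ε ≤ a i ^ 2} := by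
      intro d
      have h1 := hmono d
      have h2 : (0:ℝ) ≤ a (j - (K : ℤ) * m) := norm_nonneg _
      exact pow_le_pow_left₀ h2 h1 2
    exact (Set.infinite_of_injective_forall_mem hinj hmem) hcof
  have hBzero : ∀ j : ℤ, ‖B j u‖ ^ 2 = 0 := fun j => by rw [show ‖B j u‖ = a j from rfl, hzero j]; ring
  have : HasSum (fun j : ℤ => ‖B j u‖ ^ 2) 0 := by
    simp only [hBzero]
    exact hasSum_zero
  have hnorm : ‖u‖ ^ 2 = 0 := (hres u).unique this
  have : ‖u‖ = 0 := by
    nlinarith [norm_nonneg u, sq_nonneg ‖u‖]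
  exact norm_eq_zero.mp this
end

section
/- Let H be a Hilbert space with orthogonal projections (P_j)_{j∈ℤ} forming a resolution of identity (P_jP_k = δ_{jk}P_j, ∑_j P_j = I strongly). Let A, B be bounded operators on H such that A P_j = P_{j+m} A for all j (A raises frequency by m ≠ 0), B commutes with every P_j, and B P_j has operator norm ≤ ε_j with ε_j → 0 as |j| → ∞. If u ∈ H satisfies u = A B u, then u = 0. -/
/-!
Along the progression `j, j - m, j - 2m, …` the norms `‖P_j u‖` satisfy
`‖P_{k+m} u‖ ≤ ‖A‖ ε_k ‖P_k u‖`. Once `‖A‖ ε_k ≤ 1` this makes them non-decreasing as the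
progression runs off to infinity, yet they tend to `0` because `∑ P_j u` converges; so they
vanish from some point on, and the same inequality carries the zeros back to `j`.
-/

open Filter

namespace NoResonance

theorem eq_zero_of_le_mul_succ {b c : ℕ → ℝ} (hb : ∀ n, 0 ≤ b n)
    (hb0 : Tendsto b atTop (nhds 0)) (hbc : ∀ n, b n ≤ c n * b (n + 1))
    (hc : ∀ᶠ n in atTop, c n ≤ 1) (n : ℕ) : b n = 0 := by
  obtain ⟨N, hN⟩ := eventually_atTop.mp hc
  have htail_mono : Monotone fun k => b (k + N) :=
    monotone_nat_of_le_succ fun k => by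
      rw [Nat.add_right_comm]
      exact (hbc _).trans (mul_le_of_le_one_left (hb _) (hN _ (Nat.le_add_left N k)))
  have htail : ∀ k, b (k + N) = 0 := fun k =>
    le_antisymm (htail_mono.ge_of_tendsto (hb0.comp (tendsto_add_atTop_nat N)) k) (hb _)
  suffices ∀ k n, N ≤ n + k → b n = 0 from this N n (Nat.le_add_left N n)
  intro k
  induction k with
  | zero =>
    intro n hn
    simpa [Nat.sub_add_cancel (show N ≤ n by omega)] using htail (n - N)
  | succ k ih =>
    intro n hn
    have hsucc : b (n + 1) = 0 := ih (n + 1) (by omega)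
    exact le_antisymm (by simpa [hsucc] using hbc n) (hb n)

theorem tendsto_sub_nat_mul_cofinite {m : ℤ} (hm : m ≠ 0) (j : ℤ) :
    Tendsto (fun n : ℕ => j - n * m) atTop cofinite := by
  rw [← Nat.cofinite_eq_atTop]
  refine Function.Injective.tendsto_cofinite fun x y hxy => ?_
  have : (x : ℤ) * m = y * m := by simpa using hxy
  exact_mod_cast mul_right_cancel₀ hm this

theorem eq_zero_of_le_mul_add {a c : ℤ → ℝ} {m : ℤ} (hm : m ≠ 0) (ha : ∀ j, 0 ≤ a j)
    (ha0 : Tendsto a cofinite (nhds 0)) (hac : ∀ j, a (j + m) ≤ c j * a j)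
    (hc : ∀ᶠ j in cofinite, c j ≤ 1) (j : ℤ) : a j = 0 := by
  have hprog := tendsto_sub_nat_mul_cofinite hm j
  have hstep : ∀ n : ℕ, a (j - n * m) ≤ c (j - (n + 1 : ℕ) * m) * a (j - (n + 1 : ℕ) * m) := by
    intro n
    convert hac (j - (n + 1 : ℕ) * m) using 2
    push_cast
    ring
  simpa using eq_zero_of_le_mul_succ (fun n => ha _) (ha0.comp hprog) hstep
    ((hprog.comp (tendsto_add_atTop_nat 1)).eventually hc) 0

theorem norm_proj_add_le {𝕜 E ι : Type*} [NontriviallyNormedField 𝕜] [NormedAddCommGroup E]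
    [NormedSpace 𝕜 E] [Add ι] {P : ι → E →L[𝕜] E} {A B : E →L[𝕜] E} {m : ι} {ε : ι → ℝ}
    (hidem : ∀ j, (P j).comp (P j) = P j) (hA : ∀ j, A.comp (P j) = (P (j + m)).comp A)
    (hB : ∀ j, B.comp (P j) = (P j).comp B) (hε : ∀ j, ‖B.comp (P j)‖ ≤ ε j)
    {u : E} (hu : u = A (B u)) (j : ι) :
    ‖P (j + m) u‖ ≤ ‖A‖ * ε j * ‖P j u‖ := by
  have hPu : P (j + m) u = A ((B.comp (P j)) (P j u)) :=
    calc P (j + m) u = A (P j (B u)) := by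
          conv_lhs => rw [hu]
          exact (DFunLike.congr_fun (hA j) (B u)).symm
      _ = A (B (P j u)) := congrArg A (DFunLike.congr_fun (hB j) u).symm
      _ = A ((B.comp (P j)) (P j u)) := by
          rw [ContinuousLinearMap.comp_apply, ← ContinuousLinearMap.comp_apply (P j), hidem]
  calc ‖P (j + m) u‖ ≤ ‖A‖ * ‖(B.comp (P j)) (P j u)‖ := hPu ▸ A.le_opNorm _
    _ ≤ ‖A‖ * (ε j * ‖P j u‖) := by gcongr; exact (B.comp (P j)).le_of_opNorm_le (hε j) _
    _ = ‖A‖ * ε j * ‖P j u‖ := (mul_assoc _ _ _).symm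

end NoResonance

theorem abstract_no_resonance_general {H : Type*} [NormedAddCommGroup H]
    [InnerProductSpace ℂ H]
    (P : ℤ → H →L[ℂ] H)
    (hidem : ∀ j : ℤ, (P j).comp (P j) = P j)
    (hres : ∀ u : H, HasSum (fun j : ℤ => P j u) u)
    (m : ℤ) (hm : m ≠ 0) (A B : H →L[ℂ] H)
    (hA : ∀ j : ℤ, A.comp (P j) = (P (j + m)).comp A)
    (hB : ∀ j : ℤ, B.comp (P j) = (P j).comp B)
    (ε : ℤ → ℝ) (hε : ∀ j : ℤ, ‖B.comp (P j)‖ ≤ ε j)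
    (hε0 : Tendsto ε cofinite (nhds 0))
    (u : H) (hu : u = A (B u)) : u = 0 := by
  have hsmall : ∀ᶠ j in cofinite, ‖A‖ * ε j ≤ 1 := by
    have : Tendsto (fun j => ‖A‖ * ε j) cofinite (nhds 0) := by simpa using hε0.const_mul ‖A‖
    exact this.eventually_le_const zero_lt_one
  have hPu : ∀ j, ‖P j u‖ = 0 :=
    NoResonance.eq_zero_of_le_mul_add hm (fun j => norm_nonneg _)
      (by simpa using (hres u).summable.tendsto_cofinite_zero.norm)
      (NoResonance.norm_proj_add_le hidem hA hB hε hu) hsmall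
  simp only [norm_eq_zero] at hPu
  exact (hres u).unique (by simp [hPu, hasSum_zero])

theorem abstract_no_resonance {H : Type*} [NormedAddCommGroup H]
    [InnerProductSpace ℂ H] [CompleteSpace H]
    (P : ℤ → H →L[ℂ] H)
    (horth : ∀ j k : ℤ, j ≠ k → (P j).comp (P k) = 0)
    (hidem : ∀ j : ℤ, (P j).comp (P j) = P j)
    (hsa : ∀ (j : ℤ) (u v : H), (inner ℂ (P j u) v : ℂ) = inner ℂ u (P j v))
    (hres : ∀ u : H, HasSum (fun j : ℤ => P j u) u)
    (m : ℤ) (hm : m ≠ 0) (A B : H →L[ℂ] H)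
    (hA : ∀ j : ℤ, A.comp (P j) = (P (j + m)).comp A)
    (hB : ∀ j : ℤ, B.comp (P j) = (P j).comp B)
    (ε : ℤ → ℝ) (hε : ∀ j : ℤ, ‖B.comp (P j)‖ ≤ ε j)
    (hε0 : Tendsto ε cofinite (nhds 0))
    (u : H) (hu : u = A (B u)) : u = 0 :=
  abstract_no_resonance_general P hidem hres m hm A B hA hB ε hε hε0 u hu
end
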